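/- The semantic mapping f(s, M) := s from SCDS configurations (of the compiled system) to SC ledgers, which forgets the message store, is a strict morphism, and hence the compiled SCDS implements the abstract social contract SC. -/

import Mathlib

variable {V A : Type*}

/-- `h` restricted to acts authored by `u`. -/
def restrictH [DecidableEq V] (h : List (V × A)) (u : V) : List (V × A) :=
  h.filter (fun m => m.1 = u)

/-- The abstract social contract transition relation determined by the output-closed
enabling condition `Tout` (outputs depend only on the acting agent's history) and
input-closure (every sound input transition is included). -/
def SCT [DecidableEq V] (Tout : V → List (V × A) → A → Prop)
    (l l' : V → List (V × A)) : Prop :=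
  -- output v-transition, enabled as a function of l_v alone
  (∃ (v : V) (a : A), Tout v (l v) a ∧
    l' = Function.update l v (l v ++ [(v, a)])) ∨
  -- sound input v-transition (input-closed: all of these are in T)
  (∃ (v u : V) (a : A), u ≠ v ∧
    restrictH (l v ++ [(u, a)]) u <+: restrictH (l u) u ∧
    l' = Function.update l v (l v ++ [(u, a)]))

/-- Ledgers reachable in the abstract social contract from the all-empty ledger. -/
def SCReachable [DecidableEq V] (Tout : V → List (V × A) → A → Prop)
    (l : V → List (V × A)) : Prop :=
  Relation.ReflTransGen (SCT Tout) (fun _ => []) l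

/-- A compiled-SCDS configuration: the ledger of histories together with per-pair
FIFO queues of in-flight messages. -/
structure CConfig (V A : Type*) where
  hist : V → List (V × A)
  queue : V → V → List (V × A)

/-- A step of the compiled SCDS: outputs are enabled exactly when the corresponding SC
output transition is, and are broadcast to the store; inputs consume the oldest
in-flight message. -/
def CStep [DecidableEq V] (Tout : V → List (V × A) → A → Prop)
    (c c' : CConfig V A) : Prop :=
  (∃ (v : V) (a : A), Tout v (c.hist v) a ∧
    c'.hist = Function.update c.hist v (c.hist v ++ [(v, a)]) ∧
    c'.queue = fun x y => if x = v ∧ y ≠ v then c.queue x y ++ [(v, a)] else c.queue x y) ∨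
  (∃ (u v : V) (m : V × A) (rest : List (V × A)), u ≠ v ∧
    c.queue u v = m :: rest ∧
    c'.hist = Function.update c.hist v (c.hist v ++ [m]) ∧
    c'.queue = fun x y => if x = u ∧ y = v then rest else c.queue x y)

/-- SCDS configurations reachable from the initial configuration. -/
def CReachable [DecidableEq V] (Tout : V → List (V × A) → A → Prop)
    (c : CConfig V A) : Prop :=
  Relation.ReflTransGen (CStep Tout) ⟨fun _ => [], fun _ _ => []⟩ c

/-!
The store is exactly the undelivered part of each sender's own history: for `u ≠ v`, the acts
of `u` already in `l_v`, followed by the queue from `u` to `v`, are the acts of `u` in `l_u`.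
This invariant holds initially and is preserved by both kinds of step. Under it, an input
`u(a)` to `v` is sound precisely when `u(a)` is at the head of the queue from `u` to `v`, so
delivering a message is a sound SC input and every sound SC input can be delivered; output
steps coincide in the two systems by construction.
-/

section

variable [DecidableEq V]

theorem restrictH_append_singleton (h : List (V × A)) (m : V × A) (u : V) :
    restrictH (h ++ [m]) u = restrictH h u ++ if m.1 = u then [m] else [] := by
  by_cases hm : m.1 = u <;> simp [restrictH, hm]

theorem fst_eq_of_mem_restrictH {h : List (V × A)} {u : V} {m : V × A}
    (hm : m ∈ restrictH h u) : m.1 = u := by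
  simpa using (List.mem_filter.mp hm).2

namespace CConfig

def StoreInv (c : CConfig V A) : Prop :=
  ∀ u v : V, u ≠ v → restrictH (c.hist v) u ++ c.queue u v = restrictH (c.hist u) u

theorem storeInv_init : StoreInv (⟨fun _ => [], fun _ _ => []⟩ : CConfig V A) :=
  fun _ _ _ => rfl

namespace StoreInv

variable {Tout : V → List (V × A) → A → Prop} {c c' : CConfig V A}

theorem fst_eq_of_mem_queue (hc : c.StoreInv) {u v : V} (huv : u ≠ v) {m : V × A}
    (hm : m ∈ c.queue u v) : m.1 = u :=
  fst_eq_of_mem_restrictH (h := c.hist u) (hc u v huv ▸ List.mem_append_right _ hm)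

theorem sound_input_iff (hc : c.StoreInv) {u v : V} (huv : u ≠ v) (a : A) :
    restrictH (c.hist v ++ [(u, a)]) u <+: restrictH (c.hist u) u ↔
      ∃ rest, c.queue u v = (u, a) :: rest := by
  rw [restrictH_append_singleton, if_pos rfl, ← hc u v huv, List.prefix_append_right_inj]
  exact ⟨fun ⟨rest, h⟩ => ⟨rest, h.symm⟩, fun ⟨rest, h⟩ => ⟨rest, h.symm⟩⟩

theorem cStep (hc : c.StoreInv) (hs : CStep Tout c c') : c'.StoreInv := by
  rcases hs with ⟨v, a, -, hh, hq⟩ | ⟨u', v, m, rest, hu'v, hqm, hh, hq⟩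
  · intro u w huw
    have := hc u w huw
    rw [hh, hq]
    by_cases hu : u = v
    · subst hu
      simp [Ne.symm huw, restrictH_append_singleton, ← this]
    · by_cases hw : w = v
      · subst hw
        simp [hu, Ne.symm hu, restrictH_append_singleton, this]
      · simp [hu, hw, this]
  · have hm : m.1 = u' := hc.fst_eq_of_mem_queue hu'v (hqm ▸ List.mem_cons_self)
    intro u w huw
    have := hc u w huw
    rw [hh, hq]
    by_cases hw : w = v
    · subst hw
      by_cases hu : u = u'
      · subst hu
        simp [huw, restrictH_append_singleton, hm, ← this, hqm]
      · simp [huw, hu, restrictH_append_singleton, hm, Ne.symm hu, this]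
    · by_cases hu : u = v
      · subst hu
        simp [hw, restrictH_append_singleton, hm, hu'v, this]
      · simp [hw, hu, this]

theorem sct_of_cStep (hc : c.StoreInv) (hs : CStep Tout c c') : SCT Tout c.hist c'.hist := by
  rcases hs with ⟨v, a, hT, hh, -⟩ | ⟨u, v, ⟨w, a⟩, rest, huv, hqm, hh, -⟩
  · exact Or.inl ⟨v, a, hT, hh⟩
  · obtain rfl : w = u := hc.fst_eq_of_mem_queue huv (hqm ▸ List.mem_cons_self)
    exact Or.inr ⟨v, w, a, huv, (hc.sound_input_iff huv a).2 ⟨rest, hqm⟩, hh⟩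

theorem exists_cStep (hc : c.StoreInv) {l' : V → List (V × A)} (hl : SCT Tout c.hist l') :
    ∃ c' : CConfig V A, CStep Tout c c' ∧ c'.hist = l' := by
  rcases hl with ⟨v, a, hT, rfl⟩ | ⟨v, u, a, huv, hsound, rfl⟩
  · exact ⟨⟨_, fun x y => if x = v ∧ y ≠ v then c.queue x y ++ [(v, a)] else c.queue x y⟩,
      Or.inl ⟨v, a, hT, rfl, rfl⟩, rfl⟩
  · obtain ⟨rest, hq⟩ := (hc.sound_input_iff huv a).1 hsound
    exact ⟨⟨_, fun x y => if x = u ∧ y = v then rest else c.queue x y⟩,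
      Or.inr ⟨u, v, (u, a), rest, huv, hq, rfl, rfl⟩, rfl⟩

end StoreInv

end CConfig

variable {Tout : V → List (V × A) → A → Prop}

theorem CReachable.storeInv {c : CConfig V A} (hc : CReachable Tout c) : c.StoreInv := by
  induction hc with
  | refl => exact CConfig.storeInv_init
  | tail _ hs ih => exact ih.cStep hs

theorem SCReachable.exists_cReachable {l : V → List (V × A)} (hl : SCReachable Tout l) :
    ∃ c : CConfig V A, CReachable Tout c ∧ c.hist = l := by
  induction hl with
  | refl => exact ⟨_, .refl, rfl⟩
  | tail _ hs ih =>
    obtain ⟨c, hc, rfl⟩ := ih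
    obtain ⟨c', hs', rfl⟩ := hc.storeInv.exists_cStep hs
    exact ⟨c', hc.tail hs', rfl⟩

end

/-- The mapping `f(s, M) := s`, forgetting the message store, is a strict morphism from
the compiled SCDS to the abstract social contract on reachable states: (1) it maps the
initial configuration to the initial ledger; (2) every SCDS transition projects to an SC
transition; (3) every SC transition from the ledger of a reachable configuration is
matched by an SCDS transition with the right projection; hence (together with (4):
every reachable ledger is the image of a reachable configuration) the compiled SCDS
implements SC via `f`. -/
theorem forget_store_strict_morphism [DecidableEq V]
    (Tout : V → List (V × A) → A → Prop) :
    ((fun _ => []) = (CConfig.hist (V := V) (A := A) ⟨fun _ => [], fun _ _ => []⟩)) ∧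
    (∀ c c' : CConfig V A, CReachable Tout c → CStep Tout c c' →
      SCT Tout c.hist c'.hist) ∧
    (∀ (c : CConfig V A) (l' : V → List (V × A)), CReachable Tout c →
      SCT Tout c.hist l' → ∃ c' : CConfig V A, CStep Tout c c' ∧ c'.hist = l') ∧
    (∀ l : V → List (V × A), SCReachable Tout l →
      ∃ c : CConfig V A, CReachable Tout c ∧ c.hist = l) :=
  ⟨rfl, fun _ _ hc hs => hc.storeInv.sct_of_cStep hs,
    fun _ _ hc hl => hc.storeInv.exists_cStep hl, fun _ hl => hl.exists_cReachable⟩
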